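/- arXiv:1406.1533 — 2 statements merged into one kernel-verified Lean document; each statement's English description precedes it below -/
import Mathlib

section
/- With ψ̃_n = ρ_{h/10} * ψ_n as defined in the context, let 𝒦 = {1−K, −1, 0, 1, K−1}². Suppose α, β ∈ {1,…,K}² with n = α₁ + (α₂−1)K and m = β₁ + (β₂−1)K, and suppose β − α ∉ 𝒦. Then ∫_{[0,L]²} ∇ψ̃_n(x) · ∇ψ̃_m(x) dx = 0. -/
open MeasureTheory Real

noncomputable section

/-- The plane `ℝ²` with the Euclidean norm. -/
abbrev E2 := EuclideanSpace ℝ (Fin 2)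

/-- The standard mollifier bump `ρ(z) = K₀ exp(1/(1-|z|²))` for `|z| < 1`, `0` otherwise. -/
def rho (K0 : ℝ) (z : E2) : ℝ :=
  if ‖z‖ < 1 then K0 * Real.exp (1 / (1 - ‖z‖ ^ 2)) else 0

/-- Rescaled mollifier `ρ_ε(x) = ε⁻² ρ(x/ε)`. -/
def rhoEps (K0 ε : ℝ) (x : E2) : ℝ := (ε ^ 2)⁻¹ * rho K0 (ε⁻¹ • x)

/-- The half-open square `Q = [(i−1)h, ih) × [(j−1)h, jh)`. -/
def sqr (h : ℝ) (i j : ℕ) : Set E2 :=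
  {x | x 0 ∈ Set.Ico (((i : ℝ) - 1) * h) ((i : ℝ) * h) ∧
       x 1 ∈ Set.Ico (((j : ℝ) - 1) * h) ((j : ℝ) * h)}

/-- The lattice vector `(k₁ L, k₂ L)`. -/
def latticeVec (L : ℝ) (k : ℤ × ℤ) : E2 :=
  (WithLp.equiv 2 (Fin 2 → ℝ)).symm ![(k.1 : ℝ) * L, (k.2 : ℝ) * L]

/-- The `L`-periodized indicator `ψ(x) = ∑_{k∈ℤ²} χ_Q(x + kL)`. -/
def psi (L h : ℝ) (i j : ℕ) (x : E2) : ℝ :=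
  ∑' k : ℤ × ℤ, (sqr h i j).indicator 1 (x + latticeVec L k)

/-- The mollified bump `ψ̃ = ρ_{h/10} * ψ`. -/
def psiT (K0 L h : ℝ) (i j : ℕ) (x : E2) : ℝ :=
  ∫ y, rhoEps K0 (h / 10) (x - y) * psi L h i j y

/-- The fundamental domain `[0,L]²`. -/
def DIcc (L : ℝ) : Set E2 := {x | x 0 ∈ Set.Icc 0 L ∧ x 1 ∈ Set.Icc 0 L}

/-- The half-open fundamental domain `[0,L)²`. -/
def DIco (L : ℝ) : Set E2 := {x | x 0 ∈ Set.Ico 0 L ∧ x 1 ∈ Set.Ico 0 L}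

/-!
The mollifier `ρ_{h/10}` has radius `h/10`, so `∇ψ̃_n` vanishes at every point whose `h/5`-ball
misses the periodized cell `Q_n + Lℤ²`. If `β − α ∉ 𝒦`, then in some coordinate the cells
`α` and `β` are not neighbours modulo `K`, so the two periodized strips in that coordinate are
at distance `≥ h`; no point is within `h/5` of both. Hence at every point one of the two
gradients vanishes and the integrand is identically zero.
-/

lemma rhoEps_eq_zero_of_le_norm (K0 : ℝ) {ε : ℝ} (hε : 0 < ε) {x : E2} (hx : ε ≤ ‖x‖) :
    rhoEps K0 ε x = 0 := by
  have : ¬ ‖ε⁻¹ • x‖ < 1 := by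
    rw [not_lt, norm_smul, norm_inv, Real.norm_of_nonneg hε.le, ← div_eq_inv_mul,
      le_div_iff₀ hε, one_mul]
    exact hx
  simp [rhoEps, rho, this]

/-- A coordinate projection of the periodized cells `Q_n + Lℤ²`. -/
def periodicIco (L h : ℝ) (a : ℕ) : Set ℝ :=
  {s | ∃ k : ℤ, s + k * L ∈ Set.Ico (((a : ℝ) - 1) * h) ((a : ℝ) * h)}

lemma mem_periodicIco_of_psi_ne_zero {L h : ℝ} {i j : ℕ} {y : E2} (hy : psi L h i j y ≠ 0) :
    y 0 ∈ periodicIco L h i ∧ y 1 ∈ periodicIco L h j := by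
  obtain ⟨k, hk⟩ : ∃ k, y + latticeVec L k ∈ sqr h i j := by
    by_contra! hnot
    exact hy (by simp [psi, Set.indicator_of_notMem (hnot _)])
  refine ⟨⟨k.1, ?_⟩, ⟨k.2, ?_⟩⟩
  · simpa [latticeVec] using hk.1
  · simpa [latticeVec] using hk.2

lemma psiT_eq_zero_of_psi_eq_zero_on_ball (K0 L : ℝ) {h : ℝ} (hh0 : 0 < h) (i j : ℕ) {x : E2}
    (hψ : ∀ y ∈ Metric.ball x (h / 10), psi L h i j y = 0) : psiT K0 L h i j x = 0 := by
  have hzero : ∀ y, rhoEps K0 (h / 10) (x - y) * psi L h i j y = 0 := by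
    intro y
    by_cases hy : y ∈ Metric.ball x (h / 10)
    · rw [hψ y hy, mul_zero]
    · rw [Metric.mem_ball, not_lt, dist_comm, dist_eq_norm] at hy
      rw [rhoEps_eq_zero_of_le_norm K0 (by positivity) hy, zero_mul]
  simp [psiT, hzero]

/-- `h/5` is twice the mollifier radius, so `ψ̃` vanishes on a whole ball around `x`. -/
lemma gradient_psiT_eq_zero_of_psi_eq_zero_on_ball (K0 L : ℝ) {h : ℝ} (hh0 : 0 < h) (i j : ℕ)
    {x : E2} (hψ : ∀ y ∈ Metric.ball x (h / 5), psi L h i j y = 0) :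
    gradient (psiT K0 L h i j) x = 0 := by
  have hloc : psiT K0 L h i j =ᶠ[nhds x] fun _ => 0 := by
    filter_upwards [Metric.ball_mem_nhds x (by positivity : (0 : ℝ) < h / 10)] with x' hx'
    refine psiT_eq_zero_of_psi_eq_zero_on_ball K0 L hh0 i j fun y hy => hψ y ?_
    rw [Metric.mem_ball] at hx' hy ⊢
    linarith [dist_triangle y x' x]
  rw [hloc.gradient_eq, gradient_fun_const]

lemma gradient_psiT_eq_zero_of_coord_far (K0 L : ℝ) {h : ℝ} (hh0 : 0 < h) (i j : ℕ) {x : E2}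
    (c : Fin 2) {P : Set ℝ} (hP : ∀ y, psi L h i j y ≠ 0 → y c ∈ P)
    (hfar : ∀ s ∈ P, h / 5 ≤ |x c - s|) : gradient (psiT K0 L h i j) x = 0 := by
  refine gradient_psiT_eq_zero_of_psi_eq_zero_on_ball K0 L hh0 i j fun y hy => ?_
  by_contra hne
  have hyx : |x c - y c| < h / 5 := by
    rw [← Real.dist_eq, dist_comm]
    exact (PiLp.dist_apply_le y x c).trans_lt hy
  exact (hfar _ (hP y hne)).not_gt hyx

/-- Points of the periodized cells `a` and `b` closer than `2h/5` force the cells to be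
neighbours modulo `K`. -/
lemma abs_sub_add_mul_le_one {L h : ℝ} (hh0 : 0 < h) {K : ℕ} (hLK : L = K * h) {a b : ℕ}
    {s s' : ℝ} {k k' : ℤ}
    (hs : s + k * L ∈ Set.Ico (((a : ℝ) - 1) * h) ((a : ℝ) * h))
    (hs' : s' + k' * L ∈ Set.Ico (((b : ℝ) - 1) * h) ((b : ℝ) * h))
    (hss' : |s - s'| < 2 * h / 5) :
    |(b : ℤ) - a + (k - k') * K| ≤ 1 := by
  set M : ℤ := (b : ℤ) - a + (k - k') * K with hM
  have hMh : (M : ℝ) * h = (b - a) * h + (k - k') * L := by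
    rw [hM, hLK]; push_cast; ring
  rw [abs_lt] at hss'
  obtain ⟨hs₁, hs₂⟩ := hs
  obtain ⟨hs'₁, hs'₂⟩ := hs'
  have hlt : (M : ℝ) < 2 := by
    by_contra! h2
    nlinarith
  have hgt : (-2 : ℝ) < M := by
    by_contra! h2
    nlinarith
  have hlt' : M < 2 := by exact_mod_cast hlt
  have hgt' : -2 < M := by exact_mod_cast hgt
  rw [abs_le]
  omega

lemma sub_mem_of_abs_sub_add_mul_le_one {K a b j : ℤ} (ha : 1 ≤ a) (ha' : a ≤ K) (hb : 1 ≤ b)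
    (hb' : b ≤ K) (hj : |b - a + j * K| ≤ 1) :
    b - a ∈ ({1 - K, -1, 0, 1, K - 1} : Set ℤ) := by
  rw [abs_le] at hj
  simp only [Set.mem_insert_iff, Set.mem_singleton_iff]
  rcases lt_trichotomy j 0 with hj0 | rfl | hj0
  · have : j * K ≤ -K := by nlinarith
    omega
  · omega
  · have : K ≤ j * K := by nlinarith
    omega

lemma far_or_far_of_sub_notMem {L h : ℝ} (hh0 : 0 < h) {K : ℕ} (hLK : L = K * h) {a b : ℕ}
    (ha : a ∈ Finset.Icc 1 K) (hb : b ∈ Finset.Icc 1 K)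
    (hab : (b : ℤ) - a ∉ ({1 - (K : ℤ), -1, 0, 1, (K : ℤ) - 1} : Set ℤ)) (t : ℝ) :
    (∀ s ∈ periodicIco L h a, h / 5 ≤ |t - s|) ∨ (∀ s ∈ periodicIco L h b, h / 5 ≤ |t - s|) := by
  by_contra! hnear
  obtain ⟨⟨s, ⟨k, hk⟩, hts⟩, ⟨s', ⟨k', hk'⟩, hts'⟩⟩ := hnear
  have hss' : |s - s'| < 2 * h / 5 := by
    linarith [abs_sub_le s t s', abs_sub_comm s t]
  rw [Finset.mem_Icc] at ha hb
  exact hab (sub_mem_of_abs_sub_add_mul_le_one (by omega) (by omega) (by omega) (by omega)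
    (abs_sub_add_mul_le_one hh0 hLK hk hk' hss'))

theorem psiT_gradient_almost_orthogonal_general (L : ℝ) (hL : 0 < L) (K : ℕ) (hK : 0 < K)
    (h : ℝ) (hh : h = L / K) (K0 : ℝ)
    (α β : ℕ × ℕ) (hα1 : α.1 ∈ Finset.Icc 1 K) (hα2 : α.2 ∈ Finset.Icc 1 K)
    (hβ1 : β.1 ∈ Finset.Icc 1 K) (hβ2 : β.2 ∈ Finset.Icc 1 K)
    (hsep : ((β.1 : ℤ) - (α.1 : ℤ), (β.2 : ℤ) - (α.2 : ℤ)) ∉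
      (({1 - (K : ℤ), -1, 0, 1, (K : ℤ) - 1} : Set ℤ) ×ˢ
       ({1 - (K : ℤ), -1, 0, 1, (K : ℤ) - 1} : Set ℤ))) :
    (∫ x in DIcc L, inner (𝕜 := ℝ)
        (gradient (psiT K0 L h α.1 α.2) x) (gradient (psiT K0 L h β.1 β.2) x)) = 0 := by
  have hh0 : 0 < h := by rw [hh]; positivity
  have hLK : L = K * h := by rw [hh]; field_simp
  have hdisj : ∀ x : E2,
      gradient (psiT K0 L h α.1 α.2) x = 0 ∨ gradient (psiT K0 L h β.1 β.2) x = 0 := by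
    intro x
    rw [Set.mem_prod, not_and_or] at hsep
    rcases hsep with hsep | hsep
    · refine (far_or_far_of_sub_notMem hh0 hLK hα1 hβ1 hsep (x 0)).imp ?_ ?_ <;>
        exact gradient_psiT_eq_zero_of_coord_far K0 L hh0 _ _ 0
          (fun y hy => (mem_periodicIco_of_psi_ne_zero hy).1)
    · refine (far_or_far_of_sub_notMem hh0 hLK hα2 hβ2 hsep (x 1)).imp ?_ ?_ <;>
        exact gradient_psiT_eq_zero_of_coord_far K0 L hh0 _ _ 1
          (fun y hy => (mem_periodicIco_of_psi_ne_zero hy).2)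
  refine integral_eq_zero_of_ae (Filter.Eventually.of_forall fun x => ?_)
  rcases hdisj x with hx | hx <;> simp [hx]

/-- Proposition 2.4 (ii): if `β − α ∉ 𝒦 = {1−K, −1, 0, 1, K−1}²` then
`∫_{[0,L]²} ∇ψ̃ₙ(x) · ∇ψ̃ₘ(x) dx = 0`, where `n = α₁ + (α₂−1)K` and `m = β₁ + (β₂−1)K`. -/
theorem psiT_gradient_almost_orthogonal (L : ℝ) (hL : 0 < L) (K : ℕ) (hK : 0 < K)
    (h : ℝ) (hh : h = L / K) (K0 : ℝ) (hK0pos : 0 < K0) (hK0 : (∫ z, rho K0 z) = 1)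
    (α β : ℕ × ℕ) (hα1 : α.1 ∈ Finset.Icc 1 K) (hα2 : α.2 ∈ Finset.Icc 1 K)
    (hβ1 : β.1 ∈ Finset.Icc 1 K) (hβ2 : β.2 ∈ Finset.Icc 1 K)
    (hsep : ((β.1 : ℤ) - (α.1 : ℤ), (β.2 : ℤ) - (α.2 : ℤ)) ∉
      (({1 - (K : ℤ), -1, 0, 1, (K : ℤ) - 1} : Set ℤ) ×ˢ
       ({1 - (K : ℤ), -1, 0, 1, (K : ℤ) - 1} : Set ℤ))) :
    (∫ x in DIcc L, inner (𝕜 := ℝ)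
        (gradient (psiT K0 L h α.1 α.2) x) (gradient (psiT K0 L h β.1 β.2) x)) = 0 :=
  psiT_gradient_almost_orthogonal_general L hL K hK h hh K0 α β hα1 hα2 hβ1 hβ2 hsep
end
end

section
/- Let E be a real inner product space with inner product ⟪·,·⟫ and norm ‖·‖. Let μ, ν, c₁, c₂, h > 0 be real numbers with 2 μ max(c₁, √c₂) h² ≤ ν, and let v, w, r ∈ E be such that S := ⟪w, v⟫ ≥ 0 and ‖v − r‖² ≤ c₁ h² S + c₂ h⁴ ‖w‖². Then −2μ ⟪w, r⟫ ≤ ν ‖w‖² − μ S. -/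
open RealInnerProductSpace

/-- Abstract feedback-control estimate from the proof of Theorem 4.4: if
`2μ max(c₁, √c₂) h² ≤ ν`, `S = ⟪w, v⟫ ≥ 0` and `‖v − r‖² ≤ c₁h²S + c₂h⁴‖w‖²`, then
`−2μ⟪w, r⟫ ≤ ν‖w‖² − μS`. -/
theorem feedback_control_estimate_R2 {E : Type*} [NormedAddCommGroup E]
    [InnerProductSpace ℝ E] (μ ν c₁ c₂ h : ℝ) (hμ : 0 < μ) (hν : 0 < ν) (hc₁ : 0 < c₁)
    (hc₂ : 0 < c₂) (hh : 0 < h)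
    (hcond : 2 * μ * max c₁ (Real.sqrt c₂) * h ^ 2 ≤ ν) (v w r : E) (S : ℝ)
    (hSdef : S = ⟪w, v⟫) (hS : 0 ≤ S)
    (happrox : ‖v - r‖ ^ 2 ≤ c₁ * h ^ 2 * S + c₂ * h ^ 4 * ‖w‖ ^ 2) :
    -(2 * μ) * ⟪w, r⟫ ≤ ν * ‖w‖ ^ 2 - μ * S := by
  set M := max c₁ (Real.sqrt c₂) with hM
  have hMpos : 0 < M := lt_of_lt_of_le hc₁ (le_max_left _ _)
  have hc₁M : c₁ ≤ M := le_max_left _ _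
  have hc₂M : c₂ ≤ M ^ 2 := by
    have h1 : Real.sqrt c₂ ≤ M := le_max_right _ _
    have h2 : Real.sqrt c₂ ^ 2 = c₂ := Real.sq_sqrt hc₂.le
    nlinarith [Real.sqrt_nonneg c₂]
  have hip : ⟪w, r⟫ = S - ⟪w, (v - r)⟫ := by
    rw [hSdef, inner_sub_right]; ring
  have hcs : ⟪w, (v - r)⟫ ≤ ‖w‖ * ‖v - r‖ := real_inner_le_norm _ _
  rw [hip]
  set a := ‖w‖
  set b := ‖v - r‖
  have ha : 0 ≤ a := norm_nonneg _
  have hb : 0 ≤ b := norm_nonneg _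
  have ht : 0 < M * h ^ 2 := by positivity
  -- 2 t a b ≤ t² a² + b², b² ≤ t S + t² a², so 2 a b ≤ 2 t a² + S
  have key : 2 * a * b ≤ 2 * (M * h ^ 2) * a ^ 2 + S := by
    have hsq : 0 ≤ (M * h ^ 2 * a - b) ^ 2 := sq_nonneg _
    have hb2 : b ^ 2 ≤ M * h ^ 2 * S + (M * h ^ 2) ^ 2 * a ^ 2 := by
      have e1 : c₁ * h ^ 2 * S ≤ M * h ^ 2 * S :=
        mul_le_mul_of_nonneg_right (mul_le_mul_of_nonneg_right hc₁M (sq_nonneg h)) hS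
      have e2 : c₂ * h ^ 4 * a ^ 2 ≤ (M * h ^ 2) ^ 2 * a ^ 2 := by
        have : c₂ * h ^ 4 ≤ (M * h ^ 2) ^ 2 := by nlinarith [pow_nonneg hh.le 4]
        exact mul_le_mul_of_nonneg_right this (sq_nonneg a)
      linarith
    nlinarith [mul_pos ht ht]
  nlinarith [mul_le_mul_of_nonneg_left hcs (by linarith : (0:ℝ) ≤ 2 * μ),
    mul_le_mul_of_nonneg_left key hμ.le,
    mul_le_mul_of_nonneg_right hcond (sq_nonneg a)]
end
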